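/- For every positive integer a, the graph induced by the internal vertices {p_1, …, p_{2a}, v, w} of the a-Gate gadget (with all arcs among these vertices) admits a path decomposition of width at most 3 whose first bag contains both v and x = p_1 and whose last bag contains both w and y = p_{2a}. -/
import Mathlib


/-- Vertices of the `a`-Gate gadget: `Sum.inl j` is the path vertex `p_{j+1}`
(so `x = p_1` is `Sum.inl 0` and `y = p_{2a}` is `Sum.inl (2a-1)`);
`Sum.inr 0 = v`, `Sum.inr 1 = w`, `Sum.inr 2 = e_x`, `Sum.inr 3 = e_v`,
`Sum.inr 4 = o_y`, `Sum.inr 5 = o_w`. -/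
abbrev GateV (a : ℕ) := (Fin (2 * a)) ⊕ (Fin 6)

/-- Arc capacities of the `a`-Gate gadget (capacity `0` means no arc). -/
def gateCap (a : ℕ) : GateV a → GateV a → ℕ
  | Sum.inl j, Sum.inl j' => if (j' : ℕ) = (j : ℕ) + 1 then 1 else 0
  | Sum.inr i, Sum.inl j =>
      if i = 0 ∧ (j : ℕ) % 2 = 0 then 1
      else if i = 2 ∧ (j : ℕ) = 0 then 1 else 0
  | Sum.inl j, Sum.inr i =>
      if i = 1 ∧ (j : ℕ) % 2 = 1 then 1
      else if i = 4 ∧ (j : ℕ) = 2 * a - 1 then 1 else 0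
  | Sum.inr i, Sum.inr i' =>
      if i = 3 ∧ i' = 0 then a
      else if i = 1 ∧ i' = 5 then a else 0

/-- Internal vertices of the `a`-Gate gadget: the path vertices together with
`Sum.inr 0 = v` and `Sum.inr 1 = w`. -/
abbrev GateIntV (a : ℕ) := (Fin (2 * a)) ⊕ (Fin 2)

/-- Embedding of the internal vertices into the full gadget. -/
def gateEmb (a : ℕ) : GateIntV a → GateV a
  | Sum.inl j => Sum.inl j
  | Sum.inr i => Sum.inr (Fin.castLE (by omega) i)

/-- A path decomposition of the directed graph on `V` with arc relation `Adj`,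
with bags `X 0, …, X r`. -/
def IsPathDecomp {V : Type*} (Adj : V → V → Prop) {r : ℕ}
    (X : Fin (r + 1) → Finset V) : Prop :=
  (∀ v, ∃ i, v ∈ X i) ∧
  (∀ u v, Adj u v → ∃ i, u ∈ X i ∧ v ∈ X i) ∧
  (∀ v (i j k : Fin (r + 1)), i ≤ j → j ≤ k → v ∈ X i → v ∈ X k → v ∈ X j)

/-- Lemma 3.5: the internal part of the `a`-Gate gadget has a path decomposition
of width 3 with `v, x` in the first bag and `w, y` in the last bag. -/
theorem gate_gadget_pathwidth (a : ℕ) (ha : 0 < a) :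
    ∃ (r : ℕ) (X : Fin (r + 1) → Finset (GateIntV a)),
      IsPathDecomp (fun u v => 0 < gateCap a (gateEmb a u) (gateEmb a v)) X ∧
      (∀ i, (X i).card ≤ 3 + 1) ∧
      (Sum.inr 0 : GateIntV a) ∈ X 0 ∧
      (Sum.inl ⟨0, by omega⟩ : GateIntV a) ∈ X 0 ∧
      (Sum.inr 1 : GateIntV a) ∈ X (Fin.last r) ∧
      (Sum.inl ⟨2 * a - 1, by omega⟩ : GateIntV a) ∈ X (Fin.last r) := by
  refine ⟨2 * a - 2, fun i => {Sum.inr 0, Sum.inr 1,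
      Sum.inl ⟨i.1, by omega⟩, Sum.inl ⟨i.1 + 1, by omega⟩}, ⟨?_, ?_, ?_⟩, ?_, ?_, ?_, ?_, ?_⟩
  · intro u
    match u with
    | Sum.inl j =>
        refine ⟨⟨min j.1 (2 * a - 2), by omega⟩, ?_⟩
        have hj := j.2
        simp only [Finset.mem_insert, Finset.mem_singleton, Sum.inl.injEq, Fin.ext_iff]
        omega
    | Sum.inr k =>
        refine ⟨0, ?_⟩
        fin_cases k <;> simp
  · intro u v h
    match u, v with
    | Sum.inl j, Sum.inl j' =>
        simp only [gateCap, gateEmb] at h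
        split_ifs at h with h1
        · have hj' := j'.2
          refine ⟨⟨j.1, by omega⟩, ?_, ?_⟩ <;>
            simp only [Finset.mem_insert, Finset.mem_singleton, Sum.inl.injEq, Fin.ext_iff, Sum.inr.injEq, reduceCtorEq, false_or, true_or, or_true, Fin.val_mk] <;>
            omega
        · simp at h
    | Sum.inr k, Sum.inl j =>
        fin_cases k <;> simp only [gateCap, gateEmb, Fin.castLE] at h
        · split_ifs at h with h1 h2
          · have hj := j.2
            refine ⟨⟨min j.1 (2 * a - 2), by omega⟩, ?_, ?_⟩ <;>
              simp only [Finset.mem_insert, Finset.mem_singleton, Sum.inl.injEq, Fin.ext_iff, Sum.inr.injEq, reduceCtorEq, false_or, true_or, or_true, Fin.val_mk] <;>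
              simp_all <;> omega
          · exact absurd h2.1 (by decide)
          · simp at h
        · split_ifs at h <;> simp_all
    | Sum.inl j, Sum.inr k =>
        fin_cases k <;> simp only [gateCap, gateEmb, Fin.castLE] at h
        · split_ifs at h <;> simp_all
        · split_ifs at h with h1 h2
          · have hj := j.2
            refine ⟨⟨min j.1 (2 * a - 2), by omega⟩, ?_, ?_⟩ <;>
              simp only [Finset.mem_insert, Finset.mem_singleton, Sum.inl.injEq, Fin.ext_iff, Sum.inr.injEq, reduceCtorEq, false_or, true_or, or_true, Fin.val_mk] <;>
              simp_all <;> omega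
          · exact absurd h2.1 (by decide)
          · simp at h
    | Sum.inr k, Sum.inr k' =>
        exfalso
        fin_cases k <;> fin_cases k' <;> simp [gateCap, gateEmb, Fin.castLE] at h
  · intro u i j k hij hjk hi hk
    match u with
    | Sum.inr m => fin_cases m <;> simp
    | Sum.inl m =>
        have h1 : i.1 ≤ j.1 := hij
        have h2 : j.1 ≤ k.1 := hjk
        simp only [Finset.mem_insert, Finset.mem_singleton, Sum.inl.injEq, Fin.ext_iff,
          Sum.inr.injEq, reduceCtorEq, false_or, true_or, or_true, Fin.val_mk] at hi hk ⊢
        omega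
  · intro i
    refine le_trans (Finset.card_insert_le _ _) ?_
    refine Nat.succ_le_succ (le_trans (Finset.card_insert_le _ _) ?_)
    exact Nat.succ_le_succ (Finset.card_insert_le _ _)
  · simp
  · simp [Fin.ext_iff]
  · simp
  · simp only [Finset.mem_insert, Finset.mem_singleton, Sum.inl.injEq, Fin.ext_iff,
      Fin.val_last, Sum.inr.injEq, reduceCtorEq, false_or, true_or, or_true, Fin.val_mk]
    omega
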